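/- Let 𝓕 be a class of functions taking values in [0,1] that contains the zero function, and let S be a sample of n points. Then for any p with 2 ≤ p ≤ ∞, the empirical Rademacher complexity of the restriction 𝓕|_S satisfies rad_S(𝓕) ≤ inf_{α > 0} ( 4α + (12/√n) ∫_α^1 √( log N(𝓕|_S, ε, ‖·‖_p) ) dε ), where N(𝓕|_S, ε, ‖·‖_p) is the covering number of the set {(f(x₁), …, f(x_n)) : f ∈ 𝓕} ⊆ ℝ^n at scale ε with respect to the normalized p-norm ‖v‖_p = ( (1/n) ∑_{i=1}^n |v_i|^p )^{1/p} (with ‖v‖_∞ = max_i |v_i| when p = ∞). -/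

import Mathlib

/-!
Chaining. Cover the restricted class `A ⊆ [0,1]ⁿ` at the dyadic scales `2⁻ʲ` (by `{0}` at
scale `1`) and write each `a ∈ A` as a telescoping sum of the links `φ_{j+1} a - φ_j a` between
its nearest cover points, plus a remainder of `p`-norm at most `2⁻ᴷ`. Since `p ≥ 2`, the
normalized `p`-norm dominates `‖·‖₂ / √n`, so the links at level `j` form a set of at most
`N(2^{-(j+1)})²` vectors of Euclidean norm at most `3 · 2^{-(j+1)} √n`. Massart's finite class
lemma (a Chernoff bound with `cosh x ≤ exp (x² / 2)`) bounds their Rademacher average by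
`6 · 2^{-(j+1)} √(log N(2^{-(j+1)})) / √n`, and as `N` decreases in the scale, the dyadic sum
is at most twice the entropy integral.
-/

open MeasureTheory
open scoped ENNReal

/-- Empirical Rademacher complexity of a class `F` of real-valued functions on a sample
`S = (x₁, …, x_n)`. -/
noncomputable def empiricalRademacher {Z : Type*} (F : Set (Z → ℝ)) {n : ℕ}
    (S : Fin n → Z) : ℝ :=
  (1 / 2 ^ n : ℝ) * ∑ σ : Fin n → Bool,
    sSup ((fun f : Z → ℝ =>
      (1 / n : ℝ) * ∑ i, (if σ i then (1 : ℝ) else -1) * f (S i)) '' F)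

/-- The normalized `p`-norm on `ℝ^n`: `((1/n) ∑ᵢ |vᵢ|^p)^(1/p)` for finite `p`, and
`max_i |vᵢ|` for `p = ∞`. -/
noncomputable def normalizedPNorm (n : ℕ) (p : ℝ≥0∞) (v : Fin n → ℝ) : ℝ :=
  if p = ⊤ then ⨆ i, |v i|
  else ((1 / n : ℝ) * ∑ i, |v i| ^ p.toReal) ^ (1 / p.toReal)

/-- Covering number of a subset `A ⊆ ℝ^n` at scale `ε` with respect to the norm-like
function `nrm`: the minimal cardinality of a finite set `C` such that every point of `A` is
within distance `ε` of some element of `C`. -/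
noncomputable def coveringNumber (n : ℕ) (A : Set (Fin n → ℝ)) (ε : ℝ)
    (nrm : (Fin n → ℝ) → ℝ) : ℕ :=
  sInf {m : ℕ | ∃ C : Finset (Fin n → ℝ), C.card = m ∧
    ∀ a ∈ A, ∃ c ∈ C, nrm (fun i => a i - c i) ≤ ε}

open Finset Real
open scoped Pointwise

def signVec {n : ℕ} (σ : Fin n → Bool) : Fin n → ℝ := fun i => if σ i then 1 else -1

noncomputable def setRademacher {n : ℕ} (A : Set (Fin n → ℝ)) : ℝ :=
  (1 / 2 ^ n : ℝ) * ∑ σ : Fin n → Bool, sSup ((fun a => (1 / n : ℝ) * (signVec σ ⬝ᵥ a)) '' A)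

theorem empiricalRademacher_eq_setRademacher {Z : Type*} (F : Set (Z → ℝ)) {n : ℕ}
    (S : Fin n → Z) :
    empiricalRademacher F S = setRademacher ((fun f i => f (S i)) '' F) := by
  simp only [empiricalRademacher, setRademacher, Set.image_image]
  rfl

theorem le_mul_sqrt_two_mul_of_forall_pos {E L R : ℝ} (hR : 0 ≤ R)
    (h : ∀ t > 0, t * E ≤ L + t ^ 2 * R ^ 2 / 2) : E ≤ R * √(2 * L) := by
  by_contra! hE
  have hE₀ : 0 < E := (by positivity : 0 ≤ R * √(2 * L)).trans_lt hE
  rcases hR.eq_or_lt with rfl | hR₀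
  · have := h ((|L| + 1) / E) (by positivity)
    rw [div_mul_cancel₀ _ hE₀.ne'] at this
    linarith [le_abs_self L]
  · have hsq : E ^ 2 ≤ R ^ 2 * (2 * L) := by
      have := h (E / R ^ 2) (by positivity)
      field_simp at this
      nlinarith
    have : E ≤ √(R ^ 2 * (2 * L)) := le_sqrt_of_sq_le hsq
    rw [sqrt_mul (sq_nonneg R), sqrt_sq hR] at this
    linarith

section Rademacher
variable {n : ℕ}

theorem norm_toLp_signVec (σ : Fin n → Bool) : ‖WithLp.toLp 2 (signVec σ)‖ = √n := by
  rw [EuclideanSpace.norm_eq]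
  congr 1
  simp [signVec, apply_ite]

theorem signVec_dotProduct_le (σ : Fin n → Bool) (v : Fin n → ℝ) :
    signVec σ ⬝ᵥ v ≤ √n * ‖WithLp.toLp 2 v‖ := by
  have := real_inner_le_norm (WithLp.toLp 2 (signVec σ)) (WithLp.toLp 2 v)
  rwa [norm_toLp_signVec, EuclideanSpace.inner_eq_star_dotProduct, star_trivial,
    dotProduct_comm] at this

theorem sum_exp_signVec_dotProduct (g : Fin n → ℝ) :
    ∑ σ : Fin n → Bool, exp (signVec σ ⬝ᵥ g) = 2 ^ n * ∏ i, cosh (g i) := by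
  classical
  have hcosh : ∀ x : ℝ, ∑ b : Bool, exp ((if b then 1 else -1) * x) = 2 * cosh x := fun x => by
    rw [Fintype.sum_bool, cosh_eq]
    simp only [if_true, Bool.false_eq_true, if_false, one_mul, neg_one_mul]
    ring
  simp_rw [dotProduct, exp_sum, signVec]
  rw [← Fintype.prod_sum fun i (b : Bool) => exp ((if b then 1 else -1) * g i)]
  simp only [hcosh, prod_mul_distrib, prod_const, card_univ, Fintype.card_fin]

theorem avg_exp_signVec_dotProduct_le (g : Fin n → ℝ) :
    (1 / 2 ^ n : ℝ) * ∑ σ : Fin n → Bool, exp (signVec σ ⬝ᵥ g)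
      ≤ exp (‖WithLp.toLp 2 g‖ ^ 2 / 2) := by
  rw [sum_exp_signVec_dotProduct, EuclideanSpace.real_norm_sq_eq, sum_div, exp_sum,
    ← mul_assoc, one_div_mul_cancel (by positivity), one_mul]
  exact prod_le_prod (fun i _ => (cosh_pos _).le) fun i _ => cosh_le_exp_half_sq _

theorem avg_sup'_signVec_dotProduct_le {G : Finset (Fin n → ℝ)} (hG : G.Nonempty) {R : ℝ}
    (hR : 0 ≤ R) (hGR : ∀ g ∈ G, ‖WithLp.toLp 2 g‖ ≤ R) :
    (1 / 2 ^ n : ℝ) * ∑ σ : Fin n → Bool, G.sup' hG (signVec σ ⬝ᵥ ·)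
      ≤ R * √(2 * log #G) := by
  set E := (1 / 2 ^ n : ℝ) * ∑ σ : Fin n → Bool, G.sup' hG (signVec σ ⬝ᵥ ·)
  refine le_mul_sqrt_two_mul_of_forall_pos hR fun t ht => ?_
  have hjensen : exp (t * E) ≤ ∑ σ : Fin n → Bool,
      (1 / 2 ^ n : ℝ) * exp (t * G.sup' hG (signVec σ ⬝ᵥ ·)) := by
    have hw : ∑ _σ : Fin n → Bool, (1 / 2 ^ n : ℝ) = 1 := by simp
    simpa [E, mul_sum, mul_left_comm t] using
      convexOn_exp.map_sum_le (fun _ _ => by positivity) hw fun _ _ => Set.mem_univ _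
  have hmax : ∀ σ : Fin n → Bool,
      exp (t * G.sup' hG (signVec σ ⬝ᵥ ·)) ≤ ∑ g ∈ G, exp (signVec σ ⬝ᵥ (t • g)) := by
    intro σ
    obtain ⟨g, hg, hsup⟩ := exists_mem_eq_sup' hG (signVec σ ⬝ᵥ ·)
    rw [hsup, ← smul_eq_mul, ← dotProduct_smul]
    exact single_le_sum (f := fun g => exp (signVec σ ⬝ᵥ (t • g))) (fun _ _ => (exp_pos _).le) hg
  have hmgf : ∀ g ∈ G, (1 / 2 ^ n : ℝ) * ∑ σ : Fin n → Bool, exp (signVec σ ⬝ᵥ (t • g))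
      ≤ exp (t ^ 2 * R ^ 2 / 2) := by
    intro g hg
    refine (avg_exp_signVec_dotProduct_le _).trans (exp_le_exp.2 ?_)
    rw [WithLp.toLp_smul, norm_smul, norm_of_nonneg ht.le, mul_pow]
    gcongr
    exact hGR g hg
  have hbound : exp (t * E) ≤ #G * exp (t ^ 2 * R ^ 2 / 2) := calc
    exp (t * E)
      ≤ ∑ σ : Fin n → Bool, (1 / 2 ^ n : ℝ) * ∑ g ∈ G, exp (signVec σ ⬝ᵥ (t • g)) :=
      hjensen.trans (sum_le_sum fun σ _ => by gcongr; exact hmax σ)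
    _ = ∑ g ∈ G, (1 / 2 ^ n : ℝ) * ∑ σ : Fin n → Bool, exp (signVec σ ⬝ᵥ (t • g)) := by
      simp_rw [mul_sum]
      exact sum_comm
    _ ≤ #G * exp (t ^ 2 * R ^ 2 / 2) := by simpa using sum_le_sum hmgf
  rwa [← exp_le_exp, exp_add, exp_log (by exact_mod_cast hG.card_pos)]

theorem setRademacher_le_of_card_le {G : Finset (Fin n → ℝ)} {R : ℝ} {m : ℕ} (hR : 0 ≤ R)
    (hGR : ∀ g ∈ G, ‖WithLp.toLp 2 g‖ ≤ R) (hGm : #G ≤ m) :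
    setRademacher (G : Set (Fin n → ℝ)) ≤ R * √(2 * log m) / n := by
  rcases G.eq_empty_or_nonempty with rfl | hG
  · simp only [setRademacher, coe_empty, Set.image_empty, Real.sSup_empty, sum_const_zero,
      mul_zero]
    positivity
  have hsup : ∀ σ : Fin n → Bool, sSup ((fun a => (1 / n : ℝ) * (signVec σ ⬝ᵥ a)) '' G)
      = (1 / n : ℝ) * G.sup' hG (signVec σ ⬝ᵥ ·) := by
    intro σ
    rw [← sup'_eq_csSup_image, apply_sup'_eq_sup'_comp hG _ fun x y =>
      mul_max_of_nonneg x y (by positivity)]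
    rfl
  have hlog : log #G ≤ log m :=
    log_le_log (by exact_mod_cast hG.card_pos) (by exact_mod_cast hGm)
  calc setRademacher (G : Set (Fin n → ℝ))
      = (1 / n : ℝ) * ((1 / 2 ^ n : ℝ) * ∑ σ : Fin n → Bool, G.sup' hG (signVec σ ⬝ᵥ ·)) := by
        simp only [setRademacher, hsup, ← mul_sum]
        ring
    _ ≤ (1 / n : ℝ) * (R * √(2 * log m)) := by
        refine mul_le_mul_of_nonneg_left ?_ (by positivity)
        exact (avg_sup'_signVec_dotProduct_le hG hR hGR).trans (by gcongr)
    _ = R * √(2 * log m) / n := by ring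

end Rademacher

section NormalizedPNorm
variable {n : ℕ} {p : ℝ≥0∞}

theorem normalizedPNorm_nonneg (v : Fin n → ℝ) : 0 ≤ normalizedPNorm n p v := by
  unfold normalizedPNorm
  split_ifs
  · exact Real.iSup_nonneg fun i => abs_nonneg (v i)
  · positivity

theorem normalizedPNorm_le_of_forall_abs_le (hp : p ≠ 0) {v : Fin n → ℝ} {M : ℝ} (hM : 0 ≤ M)
    (h : ∀ i, |v i| ≤ M) : normalizedPNorm n p v ≤ M := by
  unfold normalizedPNorm
  split_ifs with htop
  · exact Real.iSup_le h hM
  have hq : 0 < p.toReal := ENNReal.toReal_pos hp htop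
  have hmean : (1 / n : ℝ) * ∑ i, |v i| ^ p.toReal ≤ M ^ p.toReal := calc
    (1 / n : ℝ) * ∑ i, |v i| ^ p.toReal ≤ (1 / n : ℝ) * (n * M ^ p.toReal) := by
      gcongr
      simpa using sum_le_sum fun i (_ : i ∈ univ) => rpow_le_rpow (abs_nonneg _) (h i) hq.le
    _ ≤ M ^ p.toReal := by
      rcases n.eq_zero_or_pos with rfl | hn
      · simp only [CharP.cast_eq_zero, div_zero, zero_mul]
        positivity
      · rw [← mul_assoc, one_div_mul_cancel (by positivity), one_mul]
  calc ((1 / n : ℝ) * ∑ i, |v i| ^ p.toReal) ^ (1 / p.toReal)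
      ≤ (M ^ p.toReal) ^ (1 / p.toReal) := by gcongr
    _ = M := by rw [← rpow_mul hM, mul_one_div_cancel hq.ne', rpow_one]

theorem normalizedPNorm_le_norm (hp : p ≠ 0) (v : Fin n → ℝ) : normalizedPNorm n p v ≤ ‖v‖ :=
  normalizedPNorm_le_of_forall_abs_le hp (norm_nonneg v) fun i => norm_le_pi_norm v i

theorem mean_sq_le_normalizedPNorm_sq (hp : 2 ≤ p) (v : Fin n → ℝ) :
    (1 / n : ℝ) * ∑ i, v i ^ 2 ≤ normalizedPNorm n p v ^ 2 := by
  rcases n.eq_zero_or_pos with rfl | hn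
  · simpa using sq_nonneg (normalizedPNorm 0 p v)
  have hw : ∑ _i : Fin n, (1 / n : ℝ) = 1 := by
    rw [sum_const, card_univ, Fintype.card_fin, nsmul_eq_mul, mul_one_div_cancel (by positivity)]
  unfold normalizedPNorm
  split_ifs with htop
  · have hbdd : BddAbove (Set.range fun i => |v i|) := (Set.finite_range _).bddAbove
    calc (1 / n : ℝ) * ∑ i, v i ^ 2 ≤ ∑ _i : Fin n, (1 / n : ℝ) * (⨆ j, |v j|) ^ 2 := by
          rw [mul_sum]
          refine sum_le_sum fun i _ => mul_le_mul_of_nonneg_left ?_ (by positivity)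
          rw [← sq_abs]
          exact pow_le_pow_left₀ (abs_nonneg _) (le_ciSup hbdd i) 2
      _ = (⨆ j, |v j|) ^ 2 := by rw [← sum_mul, hw, one_mul]
  have hq : 2 ≤ p.toReal := by
    simpa using (ENNReal.toReal_le_toReal (by norm_num) htop).2 hp
  have hpow : ∀ i, (|v i| ^ 2) ^ (p.toReal / 2) = |v i| ^ p.toReal := fun i => by
    rw [← rpow_natCast, ← rpow_mul (abs_nonneg _)]
    congr 1
    push_cast
    ring
  have hmean := arith_mean_le_rpow_mean univ (fun _ => (1 / n : ℝ)) (fun i => |v i| ^ 2)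
    (fun _ _ => by positivity) hw (fun _ _ => by positivity) (p := p.toReal / 2) (by linarith)
  simp only [hpow] at hmean
  simp only [← mul_sum, sq_abs] at hmean
  refine hmean.trans_eq ?_
  rw [← rpow_natCast, ← rpow_mul (by positivity)]
  congr 1
  push_cast
  field_simp

theorem norm_toLp_le_sqrt_mul_normalizedPNorm (hp : 2 ≤ p) (v : Fin n → ℝ) :
    ‖WithLp.toLp 2 v‖ ≤ √n * normalizedPNorm n p v := by
  rcases n.eq_zero_or_pos with rfl | hn
  · simp [EuclideanSpace.norm_eq]
  rw [EuclideanSpace.norm_eq, ← sqrt_sq (normalizedPNorm_nonneg v), ← sqrt_mul (by positivity)]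
  gcongr
  have := mean_sq_le_normalizedPNorm_sq hp v
  rw [one_div_mul_eq_div, div_le_iff₀ (by positivity)] at this
  simpa [mul_comm] using this

theorem one_div_mul_signVec_dotProduct_le (hp : 2 ≤ p) (σ : Fin n → Bool) (v : Fin n → ℝ) :
    (1 / n : ℝ) * (signVec σ ⬝ᵥ v) ≤ normalizedPNorm n p v := by
  rcases n.eq_zero_or_pos with rfl | hn
  · simpa using normalizedPNorm_nonneg v
  calc (1 / n : ℝ) * (signVec σ ⬝ᵥ v)
      ≤ (1 / n : ℝ) * (√n * (√n * normalizedPNorm n p v)) := by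
        gcongr
        exact (signVec_dotProduct_le σ v).trans
          (by gcongr; exact norm_toLp_le_sqrt_mul_normalizedPNorm hp v)
    _ = normalizedPNorm n p v := by
        rw [← mul_assoc √(n : ℝ), mul_self_sqrt (Nat.cast_nonneg n), ← mul_assoc,
          one_div_mul_cancel (by positivity), one_mul]

end NormalizedPNorm

section CoveringNumber
variable {n : ℕ} {A : Set (Fin n → ℝ)} {ε : ℝ} {nrm : (Fin n → ℝ) → ℝ}

theorem coveringNumber_le_card {C : Finset (Fin n → ℝ)}
    (hC : ∀ a ∈ A, ∃ c ∈ C, nrm (a - c) ≤ ε) : coveringNumber n A ε nrm ≤ #C :=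
  Nat.sInf_le ⟨C, rfl, hC⟩

theorem exists_card_eq_coveringNumber
    (h : ∃ C : Finset (Fin n → ℝ), ∀ a ∈ A, ∃ c ∈ C, nrm (a - c) ≤ ε) :
    ∃ C : Finset (Fin n → ℝ), #C = coveringNumber n A ε nrm ∧
      ∀ a ∈ A, ∃ c ∈ C, nrm (a - c) ≤ ε := by
  obtain ⟨C, hC⟩ := h
  exact Nat.sInf_mem (s := {m | ∃ C : Finset (Fin n → ℝ), #C = m ∧
    ∀ a ∈ A, ∃ c ∈ C, nrm (a - c) ≤ ε}) ⟨_, C, rfl, hC⟩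

theorem one_le_coveringNumber (hA : A.Nonempty)
    (h : ∃ C : Finset (Fin n → ℝ), ∀ a ∈ A, ∃ c ∈ C, nrm (a - c) ≤ ε) :
    1 ≤ coveringNumber n A ε nrm := by
  obtain ⟨C, hCcard, hC⟩ := exists_card_eq_coveringNumber h
  obtain ⟨a, ha⟩ := hA
  obtain ⟨c, hc, -⟩ := hC a ha
  exact hCcard ▸ card_pos.2 ⟨c, hc⟩

theorem coveringNumber_le_of_le {ε₁ ε₂ : ℝ}
    (h : ∃ C : Finset (Fin n → ℝ), ∀ a ∈ A, ∃ c ∈ C, nrm (a - c) ≤ ε₁) (hε : ε₁ ≤ ε₂) :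
    coveringNumber n A ε₂ nrm ≤ coveringNumber n A ε₁ nrm := by
  obtain ⟨C, hCcard, hC⟩ := exists_card_eq_coveringNumber h
  exact hCcard ▸ coveringNumber_le_card fun a ha =>
    (hC a ha).imp fun _ hc => ⟨hc.1, hc.2.trans hε⟩

end CoveringNumber

section MetricEntropy
variable {n : ℕ} {A : Set (Fin n → ℝ)} {p : ℝ≥0∞}

theorem exists_normalizedPNorm_cover (hp : p ≠ 0) (hA : Bornology.IsBounded A) {ε : ℝ}
    (hε : 0 < ε) :
    ∃ C : Finset (Fin n → ℝ), ∀ a ∈ A, ∃ c ∈ C, normalizedPNorm n p (a - c) ≤ ε := by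
  obtain ⟨t, -, ht, hAt⟩ := Metric.finite_approx_of_totallyBounded
    (hA.isCompact_closure.totallyBounded.subset subset_closure) ε hε
  refine ⟨ht.toFinset, fun a ha => ?_⟩
  obtain ⟨c, hc, hac⟩ := Set.mem_iUnion₂.1 (hAt ha)
  refine ⟨c, ht.mem_toFinset.2 hc, (normalizedPNorm_le_norm hp _).trans ?_⟩
  rw [← dist_eq_norm]
  exact (Metric.mem_ball.1 hac).le

theorem coveringNumber_le_one (hp : p ≠ 0) (hA : A ⊆ Metric.closedBall 0 1) {ε : ℝ}
    (hε : 1 ≤ ε) : coveringNumber n A ε (normalizedPNorm n p) ≤ 1 :=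
  coveringNumber_le_card (C := {0}) fun a ha => ⟨0, mem_singleton_self _, by
    rw [sub_zero]
    exact (normalizedPNorm_le_norm hp a).trans ((mem_closedBall_zero_iff.1 (hA ha)).trans hε)⟩

noncomputable def sqrtMetricEntropy (A : Set (Fin n → ℝ)) (p : ℝ≥0∞) (ε : ℝ) : ℝ :=
  √(log (coveringNumber n A ε (normalizedPNorm n p)))

theorem sqrtMetricEntropy_antitoneOn (hp : p ≠ 0) (hA₀ : A.Nonempty)
    (hA : Bornology.IsBounded A) : AntitoneOn (sqrtMetricEntropy A p) (Set.Ioi 0) := by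
  intro x hx y hy hxy
  refine sqrt_le_sqrt (log_le_log ?_ ?_)
  · exact_mod_cast one_le_coveringNumber hA₀ (exists_normalizedPNorm_cover hp hA hy)
  · exact_mod_cast coveringNumber_le_of_le (exists_normalizedPNorm_cover hp hA hx) hxy

theorem sqrtMetricEntropy_eq_zero (hp : p ≠ 0) (hA : A ⊆ Metric.closedBall 0 1) {ε : ℝ}
    (hε : 1 ≤ ε) : sqrtMetricEntropy A p ε = 0 :=
  sqrt_eq_zero'.2 <| log_nonpos (Nat.cast_nonneg _) <| by
    exact_mod_cast coveringNumber_le_one hp hA hε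

theorem integral_sqrtMetricEntropy_nonneg (hp : p ≠ 0) (hA : A ⊆ Metric.closedBall 0 1)
    (α : ℝ) : 0 ≤ ∫ ε in α..1, sqrtMetricEntropy A p ε := by
  rcases le_total α 1 with hα | hα
  · exact intervalIntegral.integral_nonneg hα fun _ _ => sqrt_nonneg _
  · rw [intervalIntegral.integral_congr (g := fun _ => 0) fun ε hε =>
      sqrtMetricEntropy_eq_zero hp hA (by rw [Set.uIcc_of_ge hα] at hε; exact hε.1)]
    simp

end MetricEntropy

theorem AntitoneOn.intervalIntegrable_of_Ioi {f : ℝ → ℝ} (hf : AntitoneOn f (Set.Ioi 0))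
    {a b : ℝ} (ha : 0 < a) (hab : a ≤ b) : IntervalIntegrable f volume a b :=
  (hf.mono fun _ hx => ha.trans_le (Set.uIcc_of_le hab ▸ hx).1).intervalIntegrable

theorem sum_dyadic_le_two_mul_integral {f : ℝ → ℝ} (hf : AntitoneOn f (Set.Ioi 0)) (K : ℕ) :
    ∑ j ∈ range K, (1 / 2 : ℝ) ^ (j + 1) * f ((1 / 2) ^ (j + 1))
      ≤ 2 * ∫ x in (1 / 2 : ℝ) ^ (K + 1)..1 / 2, f x := by
  induction K with
  | zero => simp
  | succ K ih =>
    set b : ℝ := (1 / 2) ^ (K + 1)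
    have hb : 0 < b := by positivity
    have hb₁ : b ≤ 1 / 2 := pow_le_of_le_one (by norm_num) (by norm_num) (by omega)
    have hstep : b * f b ≤ 2 * ∫ x in b / 2..b, f x := by
      have : ∫ _ in b / 2..b, f b ≤ ∫ x in b / 2..b, f x :=
        intervalIntegral.integral_mono_on (by linarith) intervalIntegrable_const
          (hf.intervalIntegrable_of_Ioi (by positivity) (by linarith)) fun x hx =>
            hf (show 0 < x by linarith [hx.1]) hb hx.2
      rw [intervalIntegral.integral_const, smul_eq_mul] at this
      linarith
    rw [sum_range_succ, show (1 / 2 : ℝ) ^ (K + 1 + 1) = b / 2 by rw [pow_succ]; ring,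
      ← intervalIntegral.integral_add_adjacent_intervals (b := b)
        (hf.intervalIntegrable_of_Ioi (by positivity) (by linarith))
        (hf.intervalIntegrable_of_Ioi hb hb₁)]
    linarith

section Chaining
variable {n : ℕ} {A : Set (Fin n → ℝ)} {p : ℝ≥0∞}

theorem setRademacher_le_of_chain (hp : 2 ≤ p) (hA : A.Nonempty) {K : ℕ} {δ : ℝ}
    (φ : ℕ → (Fin n → ℝ) → Fin n → ℝ) (hφ₀ : ∀ a ∈ A, φ 0 a = 0)
    (hφK : ∀ a ∈ A, normalizedPNorm n p (a - φ K a) ≤ δ) (D : ℕ → Finset (Fin n → ℝ))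
    (hD : ∀ j < K, ∀ a ∈ A, φ (j + 1) a - φ j a ∈ D j) :
    setRademacher A ≤ δ + ∑ j ∈ range K, setRademacher (D j : Set (Fin n → ℝ)) := by
  have hσ : ∀ σ : Fin n → Bool, sSup ((fun a => (1 / n : ℝ) * (signVec σ ⬝ᵥ a)) '' A)
      ≤ δ + ∑ j ∈ range K, sSup ((fun a => (1 / n : ℝ) * (signVec σ ⬝ᵥ a)) '' D j) := by
    intro σ
    refine csSup_le (hA.image _) ?_
    rintro _ ⟨a, ha, rfl⟩
    have htel : signVec σ ⬝ᵥ a = signVec σ ⬝ᵥ (a - φ K a)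
        + ∑ j ∈ range K, signVec σ ⬝ᵥ (φ (j + 1) a - φ j a) := by
      rw [← dotProduct_sum, ← dotProduct_add, sum_range_sub (φ · a), hφ₀ a ha, sub_zero,
        sub_add_cancel]
    dsimp only
    rw [htel, mul_add, mul_sum]
    gcongr with j hj
    · exact (one_div_mul_signVec_dotProduct_le hp σ _).trans (hφK a ha)
    · exact le_csSup ((D j).finite_toSet.image _).bddAbove ⟨_, hD j (mem_range.1 hj) a ha, rfl⟩
  calc setRademacher A ≤ (1 / 2 ^ n : ℝ) * ∑ σ : Fin n → Bool,
        (δ + ∑ j ∈ range K, sSup ((fun a => (1 / n : ℝ) * (signVec σ ⬝ᵥ a)) '' D j)) := by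
        unfold setRademacher
        gcongr with σ
        exact hσ σ
    _ = δ + ∑ j ∈ range K, setRademacher (D j : Set (Fin n → ℝ)) := by
        rw [sum_add_distrib, sum_comm, mul_add]
        simp [setRademacher, mul_sum]

theorem exists_dyadic_covers (hp : p ≠ 0) (hA₀ : 0 ∈ A) (hA₁ : A ⊆ Metric.closedBall 0 1) :
    ∃ C : ℕ → Finset (Fin n → ℝ), C 0 = {0} ∧
      (∀ j, #(C j) ≤ coveringNumber n A ((1 / 2) ^ j) (normalizedPNorm n p)) ∧
      ∀ j, ∀ a ∈ A, ∃ c ∈ C j, normalizedPNorm n p (a - c) ≤ (1 / 2) ^ j := by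
  choose M hMcard hM using fun j : ℕ =>
    exists_card_eq_coveringNumber <| exists_normalizedPNorm_cover hp
      (Metric.isBounded_closedBall.subset hA₁) (ε := (1 / 2) ^ j) (by positivity)
  refine ⟨fun j => if j = 0 then {0} else M j, rfl, fun j => ?_, fun j => ?_⟩
  · rcases eq_or_ne j 0 with rfl | hj
    · simpa using one_le_coveringNumber ⟨0, hA₀⟩ ⟨M 0, hM 0⟩
    · simp [hj, hMcard]
  · rcases eq_or_ne j 0 with rfl | hj
    · intro a ha
      refine ⟨0, by simp, ?_⟩
      simpa using (normalizedPNorm_le_norm hp a).trans (mem_closedBall_zero_iff.1 (hA₁ ha))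
    · simpa [hj] using hM j

theorem setRademacher_le_dyadic_sum (hp : 2 ≤ p) (hA₀ : 0 ∈ A)
    (hA₁ : A ⊆ Metric.closedBall 0 1) (K : ℕ) :
    setRademacher A ≤ (1 / 2) ^ K + 6 / √n *
      ∑ j ∈ range K, (1 / 2 : ℝ) ^ (j + 1) * sqrtMetricEntropy A p ((1 / 2) ^ (j + 1)) := by
  classical
  obtain ⟨C, hC₀, hCcard, hCcov⟩ :=
    exists_dyadic_covers (zero_lt_two.trans_le hp).ne' hA₀ hA₁
  -- `φ j a` is defined for every `a`, so that it does not depend on a proof of `a ∈ A`.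
  choose φ hφ using fun j a => show ∃ c, a ∈ A → c ∈ C j ∧
      normalizedPNorm n p (a - c) ≤ (1 / 2) ^ j from
    if ha : a ∈ A then (hCcov j a ha).imp fun _ hc _ => hc else ⟨0, fun h => absurd h ha⟩
  have hdist : ∀ j, ∀ a ∈ A, ‖WithLp.toLp 2 (a - φ j a)‖ ≤ (1 / 2) ^ j * √n := fun j a ha =>
    (norm_toLp_le_sqrt_mul_normalizedPNorm hp _).trans
      (by rw [mul_comm]; gcongr; exact (hφ j a ha).2)
  set D : ℕ → Finset (Fin n → ℝ) := fun j =>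
    (C (j + 1) - C j).filter fun d => ‖WithLp.toLp 2 d‖ ≤ 3 * (1 / 2) ^ (j + 1) * √n
  have hlink : ∀ j, ∀ a ∈ A, φ (j + 1) a - φ j a ∈ D j := by
    intro j a ha
    refine mem_filter.2 ⟨sub_mem_sub (hφ _ a ha).1 (hφ _ a ha).1, ?_⟩
    calc ‖WithLp.toLp 2 (φ (j + 1) a - φ j a)‖
        = ‖WithLp.toLp 2 (a - φ j a) - WithLp.toLp 2 (a - φ (j + 1) a)‖ := by
          rw [← WithLp.toLp_sub, sub_sub_sub_cancel_left]
      _ ≤ (1 / 2) ^ j * √n + (1 / 2) ^ (j + 1) * √n :=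
          (norm_sub_le _ _).trans (add_le_add (hdist j a ha) (hdist (j + 1) a ha))
      _ = 3 * (1 / 2) ^ (j + 1) * √n := by ring
  have hlevel : ∀ j, setRademacher (D j : Set (Fin n → ℝ))
      ≤ 6 / √n * ((1 / 2) ^ (j + 1) * sqrtMetricEntropy A p ((1 / 2) ^ (j + 1))) := by
    intro j
    set N := coveringNumber n A ((1 / 2) ^ (j + 1)) (normalizedPNorm n p)
    have hCj : #(C j) ≤ N := (hCcard j).trans <|
      coveringNumber_le_of_le ⟨C (j + 1), hCcov (j + 1)⟩
        (pow_le_pow_of_le_one (by norm_num) (by norm_num) j.le_succ)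
    have hcard : #(D j) ≤ N ^ 2 :=
      (card_filter_le _ _).trans (card_sub_le.trans (sq N ▸ Nat.mul_le_mul (hCcard _) hCj))
    refine (setRademacher_le_of_card_le (by positivity) (fun d hd => (mem_filter.1 hd).2)
      hcard).trans_eq ?_
    -- `√(2 log N²) = 2 √(log N)` and `√n / n = 1 / √n`
    rw [Nat.cast_pow, log_pow, ← mul_assoc, show (2 : ℝ) * (2 : ℕ) = 2 ^ 2 by norm_num,
      sqrt_mul (by norm_num), sqrt_sq (by norm_num), sqrtMetricEntropy, div_eq_mul_one_div 6,
      ← sqrt_div_self']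
    ring
  calc setRademacher A ≤ (1 / 2) ^ K + ∑ j ∈ range K, setRademacher (D j : Set (Fin n → ℝ)) :=
        setRademacher_le_of_chain hp ⟨0, hA₀⟩ φ
          (fun a ha => by simpa [hC₀] using (hφ 0 a ha).1) (fun a ha => (hφ K a ha).2) D
          fun j _ => hlink j
    _ ≤ _ := by
        rw [mul_sum]
        gcongr with j
        exact hlevel j

theorem setRademacher_le_entropy_integral (hp : 2 ≤ p) (hA₀ : 0 ∈ A)
    (hA₁ : A ⊆ Metric.closedBall 0 1) {α : ℝ} (hα : 0 < α) :
    setRademacher A ≤ 4 * α + 12 / √n * ∫ ε in α..1, sqrtMetricEntropy A p ε := by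
  have hp₀ : p ≠ 0 := (zero_lt_two.trans_le hp).ne'
  have hanti := sqrtMetricEntropy_antitoneOn hp₀ ⟨0, hA₀⟩
    (Metric.isBounded_closedBall.subset hA₁)
  rcases le_or_gt α (1 / 2) with hα₂ | hα₂
  · obtain ⟨K, hK₁, hK₂⟩ := exists_nat_pow_near_of_lt_one (by positivity : 0 < 2 * α)
      (by linarith) (by norm_num : (0 : ℝ) < 1 / 2) (by norm_num)
    rw [pow_succ] at hK₁
    have hαK : α ≤ (1 / 2) ^ (K + 1) := by rw [pow_succ]; linarith
    calc setRademacher A ≤ (1 / 2) ^ K + 6 / √n *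
          ∑ j ∈ range K, (1 / 2 : ℝ) ^ (j + 1) * sqrtMetricEntropy A p ((1 / 2) ^ (j + 1)) :=
          setRademacher_le_dyadic_sum hp hA₀ hA₁ K
      _ ≤ 4 * α + 6 / √n *
          (2 * ∫ ε in (1 / 2 : ℝ) ^ (K + 1)..1 / 2, sqrtMetricEntropy A p ε) := by
          gcongr
          · linarith
          · exact sum_dyadic_le_two_mul_integral hanti K
      _ ≤ 4 * α + 12 / √n * ∫ ε in α..1, sqrtMetricEntropy A p ε := by
          rw [← mul_assoc, div_mul_eq_mul_div, show (6 : ℝ) * 2 = 12 by norm_num]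
          gcongr
          exact intervalIntegral.integral_mono_interval hαK
            (pow_le_of_le_one (by norm_num) (by norm_num) (by omega)) (by norm_num)
            (Filter.Eventually.of_forall fun _ => sqrt_nonneg _)
            (hanti.intervalIntegrable_of_Ioi hα (by linarith))
  · have := integral_sqrtMetricEntropy_nonneg hp₀ hA₁ α
    calc setRademacher A ≤ 1 := by simpa using setRademacher_le_dyadic_sum hp hA₀ hA₁ 0
      _ ≤ 4 * α + 12 / √n * ∫ ε in α..1, sqrtMetricEntropy A p ε := by
          have : 0 ≤ 12 / √n * ∫ ε in α..1, sqrtMetricEntropy A p ε := by positivity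
          linarith

end Chaining

/-- Dudley's entropy integral bound: for a class `F` of `[0,1]`-valued
functions containing `0`, a sample `S` of `n` points and any `2 ≤ p ≤ ∞`,
`rad_S(F) ≤ inf_{α>0} (4α + (12/√n) ∫_α^1 √(log N(F|_S, ε, ‖·‖_p)) dε)`. -/
theorem dudley_entropy_integral
    {Z : Type*} (F : Set (Z → ℝ)) (n : ℕ) (S : Fin n → Z)
    (hF0 : (fun _ : Z => (0 : ℝ)) ∈ F)
    (hFrange : ∀ f ∈ F, ∀ z : Z, f z ∈ Set.Icc (0 : ℝ) 1)
    (p : ℝ≥0∞) (hp : 2 ≤ p) :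
    empiricalRademacher F S ≤
      sInf ((fun α : ℝ =>
        4 * α + 12 / Real.sqrt n *
          ∫ ε in α..1, Real.sqrt (Real.log
            (coveringNumber n ((fun f : Z → ℝ => fun i : Fin n => f (S i)) '' F) ε
              (normalizedPNorm n p)))) '' Set.Ioi (0 : ℝ)) := by
  set A := (fun f : Z → ℝ => fun i : Fin n => f (S i)) '' F
  have hA₀ : 0 ∈ A := ⟨_, hF0, rfl⟩
  have hA₁ : A ⊆ Metric.closedBall 0 1 := by
    rintro _ ⟨f, hf, rfl⟩
    refine mem_closedBall_zero_iff.2 ((pi_norm_le_iff_of_nonneg zero_le_one).2 fun i => ?_)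
    rw [Real.norm_eq_abs, abs_le]
    exact ⟨by linarith [(hFrange f hf (S i)).1], (hFrange f hf (S i)).2⟩
  rw [empiricalRademacher_eq_setRademacher]
  refine le_csInf ⟨_, 1, Set.mem_Ioi.2 one_pos, rfl⟩ ?_
  rintro _ ⟨α, hα, rfl⟩
  exact setRademacher_le_entropy_integral hp hA₀ hA₁ hα
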